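/- arXiv:2101.01092 — 2 statements merged into one kernel-verified Lean document; each statement's English description precedes it below -/
import Mathlib

section
/- Let R be a commutative ring whose Jacobson radical contains the prime p, let i ≥ 1, and fix π ∈ p^i R. Then: (i) ⟨π, a⟩ + ⟨π, b⟩ ≡ ⟨π, a+b⟩ modulo U^i K_2(R) for all a, b ∈ R; (ii) if R is additively generated by its units, then ⟨π, b⟩ ∈ U^i K_2(R) for all b ∈ R. -/
/-- A ring is additively generated by its units. -/
def AddGenByUnits (R : Type) [CommRing R] : Prop :=
  AddSubgroup.closure {x : R | IsUnit x} = ⊤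
/-! ## `K₂` with Dennis–Stein and Steinberg symbols

Quillen's `K₂` is not available in Mathlib.  We axiomatise the structure actually used:
an abelian group equipped with Dennis–Stein symbols `⟨a,b⟩` (older sign convention) and
Steinberg symbols `{a,b}` satisfying the relations (D1)–(D5), bilinearity and the
Steinberg relation. -/

structure DennisSteinK2 (R : Type) [CommRing R] where
  K2 : Type
  [grp : AddCommGroup K2]
  /-- the Dennis–Stein symbol `⟨a,b⟩` (meaningful when `1 + ab` is a unit) -/
  ds : R → R → K2
  /-- the Steinberg symbol `{a,b}` -/
  st : Rˣ → Rˣ → K2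
  D1 : ∀ a b : R, IsUnit (1 + a * b) → ds a b = - ds (-b) (-a)
  D2 : ∀ a b c : R, IsUnit (1 + a * b) → IsUnit (1 + a * c) →
    ds a b + ds a c = ds a (b + c + a * b * c)
  D3 : ∀ a b c : R, IsUnit (1 + a * b * c) → ds a (b * c) = ds (a * b) c + ds (a * c) b
  /-- (D4): `⟨a,b⟩ = {1+ab, b}` when `b` and `1+ab` are units -/
  D4 : ∀ (a : R) (b u : Rˣ), (u : R) = 1 + a * b → ds a (b : R) = st u b
  /-- (D5): `⟨a,b⟩ = {−(1+a)/(1−b), (1+ab)/(1−b)}` when `1+a`, `1−b`, `1+ab` are units -/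
  D5 : ∀ (a b : R) (x y : Rˣ), IsUnit (1 - b) → (x : R) * (1 - b) = -(1 + a) →
    (y : R) * (1 - b) = 1 + a * b → ds a b = st x y
  st_mul_left : ∀ a a' b : Rˣ, st (a * a') b = st a b + st a' b
  st_mul_right : ∀ a b b' : Rˣ, st a (b * b') = st a b + st a b'
  steinberg : ∀ a b : Rˣ, (a : R) + (b : R) = 1 → st a b = 0

attribute [instance] DennisSteinK2.grp

/-- The unit filtration `U^i K₂(R)`: the subgroup generated by Steinberg symbols `{a,b}`
with `a` or `b` in `1 + pⁱR`. -/
def DennisSteinK2.U {R : Type} [CommRing R] (K : DennisSteinK2 R) (p i : ℕ) :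
    AddSubgroup K.K2 :=
  AddSubgroup.closure
    {z | ∃ a b : Rˣ, ((∃ c : R, (a : R) = 1 + (p : R) ^ i * c) ∨
      (∃ c : R, (b : R) = 1 + (p : R) ^ i * c)) ∧ z = K.st a b}

/-- The modified filtration `V^i K₂(R)`: it agrees with `U^i K₂(R)` except when `p = 2` and
`i = 2`, where the Dennis–Stein symbols `⟨2c,2⟩` are added. -/
def DennisSteinK2.V {R : Type} [CommRing R] (K : DennisSteinK2 R) (p i : ℕ) :
    AddSubgroup K.K2 :=
  if p = 2 ∧ i = 2 then
    K.U p 2 ⊔ AddSubgroup.closure {z | ∃ c : R, z = K.ds ((p : R) * c) (p : R)}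
  else K.U p i
/-!
## Statement 13

Let `R` be a commutative ring whose Jacobson radical contains the prime `p`, `i ≥ 1` and
`π ∈ pⁱR`.  Then (i) `⟨π,a⟩ + ⟨π,b⟩ ≡ ⟨π,a+b⟩ mod U^i K₂(R)` for all `a, b ∈ R`; and
(ii) if `R` is additively generated by its units then `⟨π,b⟩ ∈ U^i K₂(R)` for all `b ∈ R`.
-/

theorem dennisStein_symbols_additive_mod_U
    (p : ℕ) (hp : p.Prime) (R : Type) [CommRing R]
    (hjac : (p : R) ∈ Ideal.jacobson (⊥ : Ideal R))
    (K : DennisSteinK2 R)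
    (i : ℕ) (hi : 1 ≤ i) (π : R) (hπ : ∃ c : R, π = (p : R) ^ i * c) :
    (∀ a b : R, K.ds π a + K.ds π b - K.ds π (a + b) ∈ K.U p i) ∧
    (AddGenByUnits R → ∀ b : R, K.ds π b ∈ K.U p i) := by
  obtain ⟨c, rfl⟩ := hπ
  obtain ⟨j, rfl⟩ := Nat.exists_eq_add_of_le hi
  set π : R := (p : R) ^ (1 + j) * c with hπdef
  have hu : ∀ x : R, IsUnit (1 + π * x) := by
    intro x
    have h := Ideal.mem_jacobson_bot.mp hjac ((p : R) ^ j * c * x)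
    have he : (p : R) * ((p : R) ^ j * c * x) + 1 = 1 + π * x := by
      rw [hπdef, pow_add, pow_one]; ring
    rwa [he] at h
  have memU : ∀ (x y : Rˣ),
      ((∃ d : R, (x : R) = 1 + (p : R) ^ (1 + j) * d) ∨
        (∃ d : R, (y : R) = 1 + (p : R) ^ (1 + j) * d)) →
      K.st x y ∈ K.U p (1 + j) := fun x y h =>
    AddSubgroup.subset_closure ⟨x, y, h, rfl⟩
  have lemA : ∀ w : R, K.ds π (π * w) ∈ K.U p (1 + j) := by
    intro w
    obtain ⟨u, huu⟩ := hu (-w)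
    obtain ⟨v, hvv⟩ := hu 1
    obtain ⟨t, htt⟩ := hu (π * w)
    have h2 : ((u⁻¹ : Rˣ) : R) * (u : R) = 1 := u.inv_mul
    have hb : IsUnit (1 - π * w) := ⟨u, by rw [huu]; ring⟩
    have hx : ((-v * u⁻¹ : Rˣ) : R) * (1 - π * w) = -(1 + π) := by
      push_cast
      linear_combination ((v : R) * ((u⁻¹ : Rˣ) : R)) * huu - (v : R) * h2 - hvv
    have hy : ((t * u⁻¹ : Rˣ) : R) * (1 - π * w) = 1 + π * (π * w) := by
      push_cast
      linear_combination (-((t : R) * ((u⁻¹ : Rˣ) : R))) * huu + (t : R) * h2 + htt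
    have hD5 := K.D5 π (π * w) (-v * u⁻¹) (t * u⁻¹) hb hx hy
    rw [hD5]
    refine memU _ _ (Or.inr ⟨c * (w * (1 + π) * ((u⁻¹ : Rˣ) : R)), ?_⟩)
    push_cast
    linear_combination ((u⁻¹ : Rˣ) : R) * htt - ((u⁻¹ : Rˣ) : R) * huu + h2 +
      (w * (1 + π) * ((u⁻¹ : Rˣ) : R)) * hπdef
  have lemB : ∀ x z : R, K.ds π (x + π * z) - K.ds π x ∈ K.U p (1 + j) := by
    intro x z
    obtain ⟨u, huu⟩ := hu x
    have h2 : ((u⁻¹ : Rˣ) : R) * (u : R) = 1 := u.inv_mul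
    have hD2 := K.D2 π x (π * (z * ((u⁻¹ : Rˣ) : R))) (hu x) (hu _)
    have harg : x + π * (z * ((u⁻¹ : Rˣ) : R)) + π * x * (π * (z * ((u⁻¹ : Rˣ) : R)))
        = x + π * z := by
      linear_combination (-(π * z * ((u⁻¹ : Rˣ) : R))) * huu + (π * z) * h2
    rw [harg] at hD2
    have : K.ds π (x + π * z) - K.ds π x = K.ds π (π * (z * ((u⁻¹ : Rˣ) : R))) := by
      rw [← hD2]; abel
    rw [this]
    exact lemA _
  have part1 : ∀ a b : R, K.ds π a + K.ds π b - K.ds π (a + b) ∈ K.U p (1 + j) := by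
    intro a b
    have hD2 := K.D2 π a b (hu a) (hu b)
    have harg : a + b + π * a * b = (a + b) + π * (a * b) := by ring
    rw [harg] at hD2
    rw [hD2]
    exact lemB (a + b) (a * b)
  refine ⟨part1, ?_⟩
  intro hg b
  have hzero : K.ds π 0 = 0 := by
    have h := K.D2 π 0 0 (hu 0) (hu 0)
    have h0 : (0 : R) + 0 + π * 0 * 0 = 0 := by ring
    rw [h0] at h
    exact add_eq_right.mp h
  let S : AddSubgroup R :=
    { carrier := {x | K.ds π x ∈ K.U p (1 + j)}
      zero_mem' := by simp only [Set.mem_setOf_eq, hzero]; exact (K.U p (1 + j)).zero_mem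
      add_mem' := by
        intro a b ha hb
        have h := part1 a b
        have h' := sub_mem (add_mem ha hb) h
        simpa using h'
      neg_mem' := by
        intro a ha
        have h := part1 a (-a)
        rw [add_neg_cancel, hzero, sub_zero] at h
        have h' := sub_mem h ha
        simpa using h' }
  have hunits : {x : R | IsUnit x} ⊆ (S : Set R) := by
    rintro x ⟨xu, rfl⟩
    obtain ⟨v, hvv⟩ := hu (xu : R)
    have hD4 := K.D4 π xu v (by rw [hvv])
    show K.ds π (xu : R) ∈ K.U p (1 + j)
    rw [hD4]
    exact memU v xu (Or.inl ⟨c * (xu : R), by rw [hvv, hπdef]; ring⟩)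
  have hle : (⊤ : AddSubgroup R) ≤ S := by
    rw [← hg]
    exact (AddSubgroup.closure_le S).mpr hunits
  exact hle (AddSubgroup.mem_top b)
end

section
/- Let R be a commutative ring additively generated by its units whose Jacobson radical contains the prime p, and let i ≥ 1. Then: (i) {1+ap^i, 1+bp} ∈ V^{i+1} K_2(R) for all a, b ∈ R; (ii) {1+ap^i, −1} ∈ V^{i+1} K_2(R) for all a ∈ R; (iii) ⟨p^{i−1}a, p⟩ and ⟨p^{i−1}, pa⟩ lie in V^i K_2(R) for all a ∈ R. -/
theorem exists_one_add_pow_prime_eq {S : Type*} [CommRing S] {q : ℕ} (hq : q.Prime) (t : S) :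
    ∃ g : S, (1 + t) ^ q = 1 + q * t + t ^ q + q * t ^ 2 * g := by
  obtain ⟨m, rfl⟩ : ∃ m, q = m + 2 := ⟨q - 2, by have := hq.two_le; omega⟩
  refine ⟨∑ k ∈ Finset.range m, (((m + 2).choose (k + 2) / (m + 2) : ℕ) : S) * t ^ k, ?_⟩
  have hmid : ∀ k ∈ Finset.range m, t ^ (k + 1 + 1) * ((m + 2).choose (k + 1 + 1) : S)
      = ((m + 2 : ℕ) : S) * t ^ 2 * ((((m + 2).choose (k + 2) / (m + 2) : ℕ) : S) * t ^ k) := by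
    intro k hk
    obtain ⟨c, hc⟩ := hq.dvd_choose_self (k := k + 2) (by omega)
      (by have := Finset.mem_range.mp hk; omega)
    rw [hc, Nat.mul_div_cancel_left c (by omega)]
    push_cast
    ring
  rw [add_comm 1 t, add_pow]
  simp only [one_pow, mul_one]
  rw [Finset.sum_range_succ, Finset.sum_range_succ', Finset.sum_range_succ',
    Finset.sum_congr rfl hmid, ← Finset.mul_sum]
  simp only [zero_add, Nat.choose_self, Nat.choose_one_right, Nat.choose_zero_right]
  push_cast
  ring

theorem pow_dvd_one_add_pow_mul_pow_prime_sub {S : Type*} [CommRing S] {p k m : ℕ}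
    (hp : p.Prime) (h₁ : k ≤ m * p) (h₂ : k ≤ 2 * m + 1) (x : S) :
    (p : S) ^ k ∣ (1 + (p : S) ^ m * x) ^ p - (1 + (p : S) ^ (m + 1) * x) := by
  obtain ⟨g, hg⟩ := exists_one_add_pow_prime_eq hp ((p : S) ^ m * x)
  rw [hg]
  convert dvd_add ((pow_dvd_pow _ h₁).mul_right (x ^ p)) ((pow_dvd_pow _ h₂).mul_right (x ^ 2 * g))
    using 1
  ring

theorem AddSubgroup.mem_of_nsmul_mem_of_coprime {G : Type*} [AddCommGroup G] (H : AddSubgroup G)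
    {m n : ℕ} (hmn : m.Coprime n) {z : G} (hm : m • z ∈ H) (hn : n • z ∈ H) : z ∈ H := by
  have hz : ((m : ℤ) * m.gcdA n + n * m.gcdB n) • z = z := by
    rw [← Nat.gcd_eq_gcd_ab, hmn, Nat.cast_one, one_zsmul]
  rw [← hz, add_zsmul, mul_zsmul', mul_zsmul', natCast_zsmul, natCast_zsmul]
  exact add_mem (H.zsmul_mem hm _) (H.zsmul_mem hn _)

theorem isUnit_one_add_of_dvd {S : Type*} [CommRing S] {x b : S}
    (hx : x ∈ Ideal.jacobson (⊥ : Ideal S)) (h : x ∣ b) : IsUnit (1 + b) := by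
  obtain ⟨r, rfl⟩ := h
  rw [add_comm]
  exact Ideal.mem_jacobson_bot.mp hx r

namespace DennisSteinK2

variable {R : Type} [CommRing R] (K : DennisSteinK2 R)

theorem st_one_right (a : Rˣ) : K.st a 1 = 0 := by
  simpa using K.st_mul_right a 1 1

theorem st_one_left (b : Rˣ) : K.st 1 b = 0 := by
  simpa using K.st_mul_left 1 1 b

theorem st_inv_right (a b : Rˣ) : K.st a b⁻¹ = -K.st a b := by
  rw [eq_neg_iff_add_eq_zero, add_comm, ← K.st_mul_right, mul_inv_cancel, st_one_right]

theorem st_pow_left (n : ℕ) (a b : Rˣ) : K.st (a ^ n) b = n • K.st a b := by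
  induction n with
  | zero => simp [st_one_left]
  | succ n ih => rw [pow_succ, K.st_mul_left, ih, succ_nsmul]

theorem st_pow_right (n : ℕ) (a b : Rˣ) : K.st a (b ^ n) = n • K.st a b := by
  induction n with
  | zero => simp [st_one_right]
  | succ n ih => rw [pow_succ, K.st_mul_right, ih, succ_nsmul]

theorem ds_zero_right (a : R) : K.ds a 0 = 0 := by
  simpa using K.D2 a 0 0 (by simp) (by simp)

theorem ds_zero_left (b : R) : K.ds 0 b = 0 := by
  simpa [ds_zero_right] using K.D1 0 b (by simp)

theorem ds_one_right {a : R} (ha : IsUnit (1 + a)) : K.ds a 1 = 0 := by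
  obtain ⟨u, hu⟩ := ha
  simpa [st_one_right] using K.D4 a 1 u (by simp [hu])

theorem st_neg_self (w : Rˣ) : K.st (-w) w = 0 := by
  rw [← K.D5 0 (1 - ↑w⁻¹) (-w) w (by simp) (by simp) (by simp), ds_zero_left]

theorem ds_add_st_eq {a b : R} {α β γ : Rˣ} (hα : (α : R) = 1 + a) (hβ : (β : R) = 1 - b)
    (hγ : (γ : R) = 1 + a * b) : K.ds a b + K.st α β = K.st (-α * β⁻¹) γ := by
  have hD5 := K.D5 a b (-α * β⁻¹) (γ * β⁻¹) (hβ ▸ β.isUnit)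
    (by rw [← hβ, ← hα]; simp [mul_assoc]) (by rw [← hβ, ← hγ]; simp [mul_assoc])
  have hsplit : K.st (-α * β⁻¹) β⁻¹ = -K.st α β := by
    rw [neg_mul, ← mul_neg, K.st_mul_left, st_neg_self, add_zero, st_inv_right]
  rw [hD5, K.st_mul_right, hsplit, neg_add_cancel_right]

theorem ds_add_ds_mul_inv {a b c : R} {v : Rˣ} (hv : (v : R) = 1 + a * b)
    (hc : IsUnit (1 + a * (c * ↑v⁻¹))) : K.ds a b + K.ds a (c * ↑v⁻¹) = K.ds a (b + c) := by
  rw [K.D2 a b _ (hv ▸ v.isUnit) hc]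
  congr 1
  linear_combination c * v.mul_inv - c * ↑v⁻¹ * hv

theorem st_neg_one_right_eq {A : R} {u γ : Rˣ} (hu : (u : R) = 1 + A) (hγ : (γ : R) = 1 + 2 * A) :
    K.st u (-1) = K.st u γ - K.st (γ * u⁻¹) u⁻¹ := by
  have h₂ : K.ds A 2 + K.st u (-1) = K.st u γ := by
    simpa using K.ds_add_st_eq hu (β := -1) (by norm_num) (by rw [hγ]; ring)
  have hw : ((γ * u⁻¹ : Rˣ) : R) = 1 + A * ↑u⁻¹ := by
    rw [Units.val_mul, hγ]
    linear_combination u.inv_mul - ↑u⁻¹ * hu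
  have h₁ : K.ds A 2 = K.st (γ * u⁻¹) u⁻¹ := by
    rw [← one_add_one_eq_two, ← K.ds_add_ds_mul_inv (v := u) (by rw [hu, mul_one])
      (by rw [one_mul, ← hw]; exact Units.isUnit _), ds_one_right K (hu ▸ u.isUnit), zero_add,
      one_mul]
    exact K.D4 A u⁻¹ (γ * u⁻¹) hw
  rw [← h₂, h₁]
  abel

theorem nsmul_ds {a b : R} (h : IsUnit (1 + a * b)) (n : ℕ) :
    n • K.ds a b = K.ds a (b * ∑ i ∈ Finset.range n, (1 + a * b) ^ i) := by
  induction n with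
  | zero => simp [ds_zero_right]
  | succ n ih =>
    have hpow : 1 + a * (b * ∑ i ∈ Finset.range n, (1 + a * b) ^ i) = (1 + a * b) ^ n := by
      linear_combination mul_geom_sum (1 + a * b) n
    rw [succ_nsmul, ih, K.D2 a _ b (hpow ▸ h.pow n) h, geom_sum_succ]
    congr 1
    ring

theorem ds_pow_succ (r y : R) (n : ℕ) (h : IsUnit (1 + y * r ^ (n + 1))) :
    K.ds y (r ^ (n + 1)) = (n + 1) • K.ds (r ^ n * y) r := by
  induction n generalizing y with
  | zero => simp
  | succ n ih =>
    have h' : IsUnit (1 + y * r * r ^ (n + 1)) := by rwa [mul_assoc, ← pow_succ']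
    rw [pow_succ' r (n + 1), K.D3 y r _ h', ih (y * r) h',
      show r ^ n * (y * r) = r ^ (n + 1) * y by ring, mul_comm y]
    exact (succ_nsmul _ _).symm

variable {p : ℕ}

theorem st_mem_U_of_dvd_left {k : ℕ} {a : Rˣ} (b : Rˣ) (h : (p : R) ^ k ∣ (a : R) - 1) :
    K.st a b ∈ K.U p k := by
  obtain ⟨c, hc⟩ := h
  exact AddSubgroup.subset_closure ⟨a, b, Or.inl ⟨c, by rw [← hc]; ring⟩, rfl⟩

theorem st_mem_U_of_dvd_right {k : ℕ} (a : Rˣ) {b : Rˣ} (h : (p : R) ^ k ∣ (b : R) - 1) :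
    K.st a b ∈ K.U p k := by
  obtain ⟨c, hc⟩ := h
  exact AddSubgroup.subset_closure ⟨a, b, Or.inr ⟨c, by rw [← hc]; ring⟩, rfl⟩

theorem st_sub_st_mem_U_of_dvd_sub {k : ℕ} {a a' : Rˣ} (b : Rˣ) (h : (p : R) ^ k ∣ (a : R) - a') :
    K.st a b - K.st a' b ∈ K.U p k := by
  rw [← mul_inv_cancel_left a' a, K.st_mul_left, add_sub_cancel_left]
  refine K.st_mem_U_of_dvd_left b ?_
  rw [Units.val_mul, show (↑a'⁻¹ * ↑a - 1 : R) = ↑a'⁻¹ * (↑a - ↑a') by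
    linear_combination a'.inv_mul]
  exact h.mul_left _

theorem nsmul_mem_U_succ (hp : p.Prime) {n : ℕ} (hn : n ≠ 0) {z : K.K2} (hz : z ∈ K.U p n) :
    p • z ∈ K.U p (n + 1) := by
  have hpow (c : R) : (p : R) ^ (n + 1) ∣ (1 + (p : R) ^ n * c) ^ p - 1 := by
    have := (pow_dvd_one_add_pow_mul_pow_prime_sub (k := n + 1) (m := n) hp
      (by nlinarith [hp.two_le, Nat.pos_of_ne_zero hn]) (by omega) c).add (dvd_mul_right _ c)
    rwa [show ∀ y : R, y - (1 + (p : R) ^ (n + 1) * c) + (p : R) ^ (n + 1) * c = y - 1 by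
      intro y; ring] at this
  induction hz using AddSubgroup.closure_induction with
  | mem z hz =>
    obtain ⟨a, b, ⟨c, hc⟩ | ⟨c, hc⟩, rfl⟩ := hz
    · rw [← st_pow_left]
      exact K.st_mem_U_of_dvd_left b (by rw [Units.val_pow_eq_pow_val, hc]; exact hpow c)
    · rw [← st_pow_right]
      exact K.st_mem_U_of_dvd_right a (by rw [Units.val_pow_eq_pow_val, hc]; exact hpow c)
  | zero => simp
  | add x y _ _ hx hy => rw [smul_add]; exact add_mem hx hy
  | neg x _ hx => rw [smul_neg]; exact neg_mem hx

theorem U_le_V (i : ℕ) : K.U p i ≤ K.V p i := by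
  unfold V
  split_ifs with h
  · obtain ⟨-, rfl⟩ := h
    exact le_sup_left
  · exact le_rfl

theorem V_eq_U {i : ℕ} (h : ¬(p = 2 ∧ i = 2)) : K.V p i = K.U p i := if_neg h

theorem ds_mem_U_of_left (hjac : (p : R) ∈ Ideal.jacobson (⊥ : Ideal R))
    (hgen : AddGenByUnits R) (k : ℕ) (e y : R) :
    K.ds ((p : R) ^ (k + 1) * e) y ∈ K.U p (k + 1) := by
  set a := (p : R) ^ (k + 1) * e
  have hunit (r : R) : IsUnit (1 + a * r) := isUnit_one_add_of_dvd hjac ⟨p ^ k * e * r, by ring⟩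
  -- Twisting by units lets (D2) split `⟨a, (x + z) w⟩` as `⟨a, x w⟩ + ⟨a, z w (1 + a x w)⁻¹⟩`.
  suffices h : ∀ w : Rˣ, K.ds a (y * w) ∈ K.U p (k + 1) by simpa using h 1
  have hy : y ∈ AddSubgroup.closure {x : R | IsUnit x} := hgen ▸ AddSubgroup.mem_top y
  induction hy using AddSubgroup.closure_induction with
  | mem x hx =>
    intro w
    obtain ⟨x, rfl⟩ := hx
    obtain ⟨v, hv⟩ := hunit (x * w)
    rw [← Units.val_mul, K.D4 a (x * w) v (by rw [hv, Units.val_mul])]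
    exact K.st_mem_U_of_dvd_left _ ⟨e * (x * w), by rw [hv]; ring⟩
  | zero =>
    intro w
    rw [zero_mul, ds_zero_right]
    exact zero_mem _
  | add x z _ _ hx hz =>
    intro w
    obtain ⟨v, hv⟩ := hunit (x * w)
    rw [add_mul, ← K.ds_add_ds_mul_inv hv (hunit _)]
    exact add_mem (hx w) (by simpa [mul_assoc] using hz (w * v⁻¹))
  | neg x _ hx =>
    intro w
    simpa using hx (-w)

theorem ds_mem_U_of_right (hjac : (p : R) ∈ Ideal.jacobson (⊥ : Ideal R))
    (hgen : AddGenByUnits R) (k : ℕ) (e y : R) :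
    K.ds y ((p : R) ^ (k + 1) * e) ∈ K.U p (k + 1) := by
  rw [K.D1 _ _ (isUnit_one_add_of_dvd hjac ⟨y * p ^ k * e, by ring⟩)]
  exact neg_mem (by simpa using K.ds_mem_U_of_left hjac hgen k (-e) (-y))

theorem p_nsmul_ds_mem_U (hjac : (p : R) ∈ Ideal.jacobson (⊥ : Ideal R))
    (hgen : AddGenByUnits R) (n : ℕ) (x : R) :
    p • K.ds ((p : R) ^ n * x) p ∈ K.U p (n + 1) := by
  set c := (p : R) ^ n * x
  obtain ⟨s, hs⟩ : (p : R) ∣ ∑ i ∈ Finset.range p, (1 + c * p) ^ i := by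
    simpa using dvd_geom_sum₂_self (n := p) (x := 1 + c * p) (y := 1) ⟨c, by ring⟩
  rw [K.nsmul_ds (isUnit_one_add_of_dvd hjac ⟨c, by ring⟩), hs,
    K.D3 _ _ _ (isUnit_one_add_of_dvd hjac ⟨c * p * s, by ring⟩),
    show c * p = (p : R) ^ (n + 1) * x by ring,
    show c * (p * s) = (p : R) ^ (n + 1) * (x * s) by ring]
  exact add_mem (K.ds_mem_U_of_left hjac hgen n x _) (K.ds_mem_U_of_left hjac hgen n _ _)

theorem ds_pow_mul_mem_U_of_not_dvd (hp : p.Prime) (hjac : (p : R) ∈ Ideal.jacobson (⊥ : Ideal R))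
    (hgen : AddGenByUnits R) {n : ℕ} (hn : ¬p ∣ n + 1) (x : R) :
    K.ds ((p : R) ^ n * x) p ∈ K.U p (n + 1) := by
  have hmul : (n + 1) • K.ds ((p : R) ^ n * x) p ∈ K.U p (n + 1) := by
    rw [← K.ds_pow_succ _ _ _ (isUnit_one_add_of_dvd hjac ⟨x * p ^ n, by ring⟩)]
    simpa using K.ds_mem_U_of_right hjac hgen n 1 x
  exact AddSubgroup.mem_of_nsmul_mem_of_coprime _ (hp.coprime_iff_not_dvd.2 hn)
    (K.p_nsmul_ds_mem_U hjac hgen n x) hmul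

theorem ds_pow_succ_mul_mem_U_of_ds_pow_mul_mem_U (hp : p.Prime)
    (hjac : (p : R) ∈ Ideal.jacobson (⊥ : Ideal R)) {m : ℕ} (hm : m ≠ 0) (hmp : m + 2 ≤ m * p)
    {x : R} (hx : K.ds ((p : R) ^ m * x) p ∈ K.U p (m + 1)) :
    K.ds ((p : R) ^ (m + 1) * x) p ∈ K.U p (m + 2) := by
  obtain ⟨α, hα⟩ := isUnit_one_add_of_dvd hjac (b := (p : R) ^ (m + 1) * x) ⟨p ^ m * x, by ring⟩
  obtain ⟨β, hβ⟩ := isUnit_one_add_of_dvd hjac (b := -(p : R)) ⟨-1, by ring⟩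
  obtain ⟨γ, hγ⟩ := isUnit_one_add_of_dvd hjac ((dvd_pow_self (p : R) hm).mul_right x)
  obtain ⟨δ, hδ⟩ :=
    isUnit_one_add_of_dvd hjac (b := (p : R) ^ (m + 1) * x * p) ⟨p ^ (m + 1) * x, by ring⟩
  have hγβ : K.st γ β ∈ K.U p (m + 1) := by
    have h := K.ds_add_st_eq (b := p) hγ (by rw [hβ]; ring) (hα.trans (by ring))
    have hmem := K.st_mem_U_of_dvd_right (-γ * β⁻¹) (k := m + 1) ⟨x, by rw [hα]; ring⟩
    exact (add_mem_cancel_left hx).1 (h ▸ hmem)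
  have hαβ : K.st α β ∈ K.U p (m + 2) := by
    have h := K.nsmul_mem_U_succ hp (Nat.succ_ne_zero m) hγβ
    rw [← st_pow_left] at h
    have hsub := K.st_sub_st_mem_U_of_dvd_sub β (a := γ ^ p) (a' := α) (by
      rw [Units.val_pow_eq_pow_val, hγ, hα]
      exact pow_dvd_one_add_pow_mul_pow_prime_sub hp hmp (by omega) x)
    simpa using sub_mem h hsub
  have h := K.ds_add_st_eq (b := p) hα (by rw [hβ]; ring) hδ
  have hmem := K.st_mem_U_of_dvd_right (-α * β⁻¹) (k := m + 2) ⟨x, by rw [hδ]; ring⟩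
  exact (add_mem_cancel_right hαβ).1 (h ▸ hmem)

theorem ds_pow_mul_mem_V (hp : p.Prime) (hjac : (p : R) ∈ Ideal.jacobson (⊥ : Ideal R))
    (hgen : AddGenByUnits R) (n : ℕ) (x : R) : K.ds ((p : R) ^ n * x) p ∈ K.V p (n + 1) := by
  induction n generalizing x with
  | zero =>
    rw [K.V_eq_U (by omega)]
    exact K.ds_pow_mul_mem_U_of_not_dvd hp hjac hgen (by simpa using hp.ne_one) x
  | succ m ih =>
    by_cases hex : p = 2 ∧ m + 1 + 1 = 2
    · obtain ⟨rfl, hm⟩ := hex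
      obtain rfl : m = 0 := by omega
      rw [V, if_pos ⟨rfl, rfl⟩]
      exact AddSubgroup.mem_sup_right (AddSubgroup.subset_closure ⟨x, by norm_num⟩)
    rw [K.V_eq_U hex]
    by_cases hdvd : p ∣ m + 2
    · have hm : m ≠ 0 := by
        rintro rfl
        exact hex ⟨(Nat.prime_dvd_prime_iff_eq hp Nat.prime_two).1 hdvd, rfl⟩
      have hmp : m + 2 ≤ m * p := by
        rcases hp.two_le.eq_or_lt with rfl | hp_gt
        · omega
        · nlinarith [Nat.pos_of_ne_zero hm]
      refine K.ds_pow_succ_mul_mem_U_of_ds_pow_mul_mem_U hp hjac hm hmp ?_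
      rw [← K.V_eq_U (by rintro ⟨rfl, _⟩; omega)]
      exact ih x
    · exact K.ds_pow_mul_mem_U_of_not_dvd hp hjac hgen hdvd x

theorem ds_pow_mul_p_mul_mem_V (hp : p.Prime) (hjac : (p : R) ∈ Ideal.jacobson (⊥ : Ideal R))
    (hgen : AddGenByUnits R) (n : ℕ) (x y : R) :
    K.ds ((p : R) ^ n * x) (p * y) ∈ K.V p (n + 1) := by
  rw [K.D3 _ _ _ (isUnit_one_add_of_dvd hjac ⟨p ^ n * x * y, by ring⟩),
    show (p : R) ^ n * x * p = p ^ (n + 1) * x by ring, mul_assoc]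
  exact add_mem (K.U_le_V _ (K.ds_mem_U_of_left hjac hgen n x y))
    (K.ds_pow_mul_mem_V hp hjac hgen n (x * y))

theorem st_mem_V_succ (hp : p.Prime) (hjac : (p : R) ∈ Ideal.jacobson (⊥ : Ideal R))
    (hgen : AddGenByUnits R) {i : ℕ} {a b : R} {u v : Rˣ} (hu : (u : R) = 1 + p ^ i * a)
    (hv : (v : R) = 1 + p * b) : K.st u v ∈ K.V p (i + 1) := by
  obtain ⟨γ, hγ⟩ := isUnit_one_add_of_dvd hjac (b := p ^ i * a * (p * -b)) ⟨p ^ i * a * -b, by ring⟩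
  have h := K.ds_add_st_eq hu (by rw [hv]; ring) hγ
  have hmem := K.st_mem_U_of_dvd_right (-u * v⁻¹) (k := i + 1) ⟨-(a * b), by rw [hγ]; ring⟩
  exact (add_mem_cancel_left (K.ds_pow_mul_p_mul_mem_V hp hjac hgen i a (-b))).1
    (h ▸ K.U_le_V _ hmem)

theorem st_neg_one_mem_V_succ (hp : p.Prime) (hjac : (p : R) ∈ Ideal.jacobson (⊥ : Ideal R))
    (hgen : AddGenByUnits R) {i : ℕ} (hi : i ≠ 0) {a : R} {u : Rˣ}
    (hu : (u : R) = 1 + p ^ i * a) : K.st u (-1) ∈ K.V p (i + 1) := by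
  obtain ⟨n, rfl⟩ : ∃ n, i = n + 1 := ⟨i - 1, by omega⟩
  obtain ⟨γ, hγ⟩ := isUnit_one_add_of_dvd hjac (b := 2 * (p ^ (n + 1) * a)) ⟨2 * p ^ n * a, by ring⟩
  have hinv : (↑u⁻¹ : R) = 1 + p * -(p ^ n * a * ↑u⁻¹) := by
    linear_combination u.inv_mul - ↑u⁻¹ * hu
  have hw : ((γ * u⁻¹ : Rˣ) : R) = 1 + p ^ (n + 1) * (a * ↑u⁻¹) := by
    rw [Units.val_mul, hγ]
    linear_combination u.inv_mul - ↑u⁻¹ * hu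
  rw [K.st_neg_one_right_eq hu hγ]
  exact sub_mem (K.st_mem_V_succ hp hjac hgen (b := 2 * p ^ n * a) hu (hγ.trans (by ring)))
    (K.st_mem_V_succ hp hjac hgen hw hinv)

end DennisSteinK2

theorem dennisStein_filtration_lemma
    (p : ℕ) (hp : p.Prime) (R : Type) [CommRing R]
    (hjac : (p : R) ∈ Ideal.jacobson (⊥ : Ideal R))
    (hgen : AddGenByUnits R)
    (K : DennisSteinK2 R) (i : ℕ) (hi : 1 ≤ i) :
    -- (i) `{1+apⁱ, 1+bp} ∈ V^{i+1} K₂(R)`: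
    (∀ (a b : R) (u v : Rˣ), (u : R) = 1 + (p : R) ^ i * a → (v : R) = 1 + (p : R) * b →
      K.st u v ∈ K.V p (i + 1)) ∧
    -- (ii) `{1+apⁱ, −1} ∈ V^{i+1} K₂(R)`:
    (∀ (a : R) (u : Rˣ), (u : R) = 1 + (p : R) ^ i * a →
      K.st u (-1) ∈ K.V p (i + 1)) ∧
    -- (iii) `⟨pⁱ⁻¹a, p⟩` and `⟨pⁱ⁻¹, pa⟩` lie in `V^i K₂(R)`:
    (∀ a : R, K.ds ((p : R) ^ (i - 1) * a) (p : R) ∈ K.V p i ∧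
      K.ds ((p : R) ^ (i - 1)) ((p : R) * a) ∈ K.V p i) := by
  refine ⟨fun a b u v hu hv ↦ K.st_mem_V_succ hp hjac hgen hu hv,
    fun a u hu ↦ K.st_neg_one_mem_V_succ hp hjac hgen (by omega) hu, fun a ↦ ?_⟩
  obtain ⟨n, rfl⟩ : ∃ n, i = n + 1 := ⟨i - 1, by omega⟩
  rw [Nat.add_sub_cancel]
  exact ⟨K.ds_pow_mul_mem_V hp hjac hgen n a,
    by simpa using K.ds_pow_mul_p_mul_mem_V hp hjac hgen n 1 a⟩
end
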